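/- arXiv:1006.1126 — 3 statements merged into one kernel-verified Lean document; each statement's English description precedes it below -/
import Mathlib

section
/- Let s = (-ω, v) be an instantaneous screw and p ∈ ℝ³ a point with velocity p' = ω × p + v. Then ⟨p', d⟩ = 0 for a direction d ∈ ℝ³ if and only if ⟨s*, (p:1) ∨ (d:0)⟩ = 0, where s* = (v, -ω) and (p:1) ∨ (d:0) ∈ ℝ⁶ is the vector of 2×2 minors (ordered as in Plücker coordinates) of the 2×4 matrix with rows (p,1) and (d,0). -/
open Matrix

/-- The join `a ∨ b ∈ ℝ⁶` of two vectors `a, b ∈ ℝ⁴`: the six `2×2` minors of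
the `2×4` matrix with rows `a`, `b`, ordered as
`(|M₁₄|,|M₂₄|,|M₃₄|,|M₂₃|,−|M₁₃|,|M₁₂|)`. -/
def join44 (a b : Fin 4 → ℝ) : Fin 6 → ℝ :=
  ![a 0 * b 3 - a 3 * b 0,
    a 1 * b 3 - a 3 * b 1,
    a 2 * b 3 - a 3 * b 2,
    a 1 * b 2 - a 2 * b 1,
    -(a 0 * b 2 - a 2 * b 0),
    a 0 * b 1 - a 1 * b 0]

/-- Basic blind orthogonality constraint: with `s = (-ω, v)` an instantaneous
screw, `s* = (v, -ω)` and `p' = ω × p + v` the velocity of `p`, we have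
`⟨p', d⟩ = 0` iff `⟨s*, (p:1) ∨ (d:0)⟩ = 0`. -/
theorem velocity_orthogonal_iff (ω v p d : Fin 3 → ℝ)
    (p' : Fin 3 → ℝ) (hp' : p' = crossProduct ω p + v) :
    p' ⬝ᵥ d = 0 ↔
      (![v 0, v 1, v 2, -ω 0, -ω 1, -ω 2] : Fin 6 → ℝ) ⬝ᵥ
        join44 ![p 0, p 1, p 2, 1] ![d 0, d 1, d 2, 0] = 0 := by
  subst hp'
  have e1 : (Fin.succ 0 : Fin 3) = 1 := rfl
  have e2 : ((Fin.succ 0).succ : Fin 3) = 2 := rfl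
  simp only [join44, crossProduct, dotProduct, Fin.sum_univ_succ, Fin.sum_univ_zero,
    Matrix.cons_val_zero, Matrix.cons_val_one, Matrix.head_cons, Pi.add_apply,
    LinearMap.mk₂_apply, e1, e2,
    show ((2:Fin 4)) = (1:Fin 3).succ from rfl, show ((3:Fin 4)) = (2:Fin 3).succ from rfl,
    Matrix.cons_val_succ, Matrix.cons_val_two, Matrix.tail_cons]
  constructor <;> intro h <;> linarith [h]
end

section
/- Nested sparsity is not matroidal: there exists an edge-bicolored multigraph G = (V, R ∪ B) containing two maximal (2,2,1,1)-nested sparse subgraphs of different sizes (one with 7 edges and one with 8 edges). -/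
/-- A set `S` of edges of a multigraph (edges `Fin nE` with endpoint map `ep`
into `Fin nV × Fin nV`) is `(k,ℓ)`-sparse if every nonempty subset `W` of `n'`
vertices spans at most `k n' − ℓ` edges of `S`. -/
def IsSparse {nV nE : ℕ} (k l : ℤ) (ep : Fin nE → Fin nV × Fin nV)
    (S : Finset (Fin nE)) : Prop :=
  ∀ W : Finset (Fin nV), W.Nonempty →
    ((S.filter (fun e => (ep e).1 ∈ W ∧ (ep e).2 ∈ W)).card : ℤ) ≤
      k * (W.card : ℤ) - l

/-- An edge set `S` of an edge-bicolored multigraph with red edges `Rset` is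
`(k₁,ℓ₁,k₂,ℓ₂)`-nested sparse if `S` is `(k₁,ℓ₁)`-sparse and the red edges of
`S` are `(k₂,ℓ₂)`-sparse. -/
def IsNestedSparse {nV nE : ℕ} (k₁ l₁ k₂ l₂ : ℤ)
    (ep : Fin nE → Fin nV × Fin nV) (Rset S : Finset (Fin nE)) : Prop :=
  IsSparse k₁ l₁ ep S ∧ IsSparse k₂ l₂ ep (S ∩ Rset)

/-- Nested sparsity is not matroidal: there is an edge-bicolored multigraph
with two maximal `(2,2,1,1)`-nested sparse subgraphs of sizes 7 and 8. -/
theorem nested_sparsity_not_matroidal :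
    ∃ (nV nE : ℕ) (ep : Fin nE → Fin nV × Fin nV)
      (Rset S₁ S₂ : Finset (Fin nE)),
      (IsNestedSparse 2 2 1 1 ep Rset S₁ ∧
        ∀ e ∉ S₁, ¬ IsNestedSparse 2 2 1 1 ep Rset (insert e S₁)) ∧
      (IsNestedSparse 2 2 1 1 ep Rset S₂ ∧
        ∀ e ∉ S₂, ¬ IsNestedSparse 2 2 1 1 ep Rset (insert e S₂)) ∧
      S₁.card = 7 ∧ S₂.card = 8 := by
  refine ⟨5, 11, ![(0,1),(0,1),(1,2),(1,2),(2,3),(2,3),(0,1),(1,2),(2,3),(3,4),(0,4)],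
    {6,7,8,9,10}, {0,2,4,6,7,8,9}, {0,1,2,3,4,5,9,10}, ?_, ?_, ?_, ?_⟩
  · unfold IsNestedSparse IsSparse; decide
  · unfold IsNestedSparse IsSparse; decide
  · decide
  · decide
end

section
/- Let n ≥ 1 and consider a rigidity matrix R for a body-and-cad structure whose primitive angular rows, restricted to the 3n 'angular' columns, form a matrix A_R. If the primitive cad graph restricted to red (angular) edges has a vertex subset V' of size n' spanning more than 3n' − 3 red edges, then the corresponding rows of A_R are linearly dependent (for any realization). -/
open Matrix

/-- If the red (angular) subgraph has a nonempty vertex subset `V'` of size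
`n'` spanning more than `3n' − 3` red edges, then the corresponding rows of
the angular matrix `A_R` (each row having some `w ∈ ℝ³` in the block of one
endpoint, `−w` in the block of the other, zeros elsewhere) are linearly
dependent. -/
theorem angular_overcount_dependent (n m : ℕ)
    (ep : Fin m → Fin n × Fin n)
    (A : Matrix (Fin m) (Fin n × Fin 3) ℝ)
    (hep : ∀ r : Fin m, (ep r).1 ≠ (ep r).2)
    (hA : ∀ r : Fin m, ∃ w : Fin 3 → ℝ, ∀ (l : Fin n) (k : Fin 3),
      A r (l, k) =
        if l = (ep r).1 then w k else if l = (ep r).2 then -w k else 0)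
    (V' : Finset (Fin n)) (hV' : V'.Nonempty)
    (hcount : 3 * (V'.card : ℤ) - 3 <
      ((Finset.univ.filter
        (fun r : Fin m => (ep r).1 ∈ V' ∧ (ep r).2 ∈ V')).card : ℤ)) :
    ¬ LinearIndependent ℝ
      (fun r : {r : Fin m // (ep r).1 ∈ V' ∧ (ep r).2 ∈ V'} => A r.1) := by
  intro hLI
  classical
  set S := Finset.univ.filter (fun r : Fin m => (ep r).1 ∈ V' ∧ (ep r).2 ∈ V') with hS
  -- restriction to columns of V'
  let L : (Fin n × Fin 3 → ℝ) →ₗ[ℝ] ({x // x ∈ V'} × Fin 3 → ℝ) :=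
    LinearMap.funLeft ℝ ℝ (fun p => (p.1.1, p.2))
  -- the restricted rows are linearly independent
  have hLI' : LinearIndependent ℝ
      (fun r : {r : Fin m // (ep r).1 ∈ V' ∧ (ep r).2 ∈ V'} => L (A r.1)) := by
    rw [Fintype.linearIndependent_iff] at hLI ⊢
    intro c hc
    apply hLI c
    funext p
    obtain ⟨l, k⟩ := p
    by_cases hl : l ∈ V'
    · have := congrFun hc (⟨l, hl⟩, k)
      simpa [L, LinearMap.funLeft, Finset.sum_apply] using this
    · have hz : ∀ r : {r : Fin m // (ep r).1 ∈ V' ∧ (ep r).2 ∈ V'},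
          A r.1 (l, k) = 0 := by
        intro r
        obtain ⟨w, hw⟩ := hA r.1
        rw [hw]
        have h1 : l ≠ (ep r.1).1 := fun h => hl (h ▸ r.2.1)
        have h2 : l ≠ (ep r.1).2 := fun h => hl (h ▸ r.2.2)
        simp [h1, h2]
      simp [Finset.sum_apply, hz]
  -- the summing map
  let φ : ({x // x ∈ V'} × Fin 3 → ℝ) →ₗ[ℝ] (Fin 3 → ℝ) :=
    { toFun := fun v k => ∑ x : {x // x ∈ V'}, v (x, k)
      map_add' := by intro u v; funext k; simp [Finset.sum_add_distrib]
      map_smul' := by intro c v; funext k; simp [Finset.mul_sum]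
    }
  -- each restricted row is in ker φ
  have hker : ∀ r : {r : Fin m // (ep r).1 ∈ V' ∧ (ep r).2 ∈ V'},
      L (A r.1) ∈ LinearMap.ker φ := by
    intro r
    obtain ⟨w, hw⟩ := hA r.1
    have hne := hep r.1
    rw [LinearMap.mem_ker]
    funext k
    have : ∀ x : {x // x ∈ V'}, A r.1 (x.1, k) =
        (if x = (⟨(ep r.1).1, r.2.1⟩ : {x // x ∈ V'}) then w k else 0)
        + (if x = (⟨(ep r.1).2, r.2.2⟩ : {x // x ∈ V'}) then -w k else 0) := by
      intro x
      rw [hw]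
      by_cases h1 : x.1 = (ep r.1).1
      · have hx : x = (⟨(ep r.1).1, r.2.1⟩ : {x // x ∈ V'}) := Subtype.ext h1
        have hx2 : x ≠ (⟨(ep r.1).2, r.2.2⟩ : {x // x ∈ V'}) := by
          intro h; exact hne (h1 ▸ congrArg Subtype.val h)
        simp [h1, hx, hx2, hne]
      · have hx : x ≠ (⟨(ep r.1).1, r.2.1⟩ : {x // x ∈ V'}) := by
          intro h; exact h1 (congrArg Subtype.val h)
        by_cases h2 : x.1 = (ep r.1).2
        · have hx2 : x = (⟨(ep r.1).2, r.2.2⟩ : {x // x ∈ V'}) := Subtype.ext h2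
          simp [h1, h2, hx, hx2, Ne.symm hne]
        · have hx2 : x ≠ (⟨(ep r.1).2, r.2.2⟩ : {x // x ∈ V'}) := by
            intro h; exact h2 (congrArg Subtype.val h)
          simp [h1, h2, hx, hx2]
    show (∑ x : {x // x ∈ V'}, L (A r.1) (x, k)) = 0
    have hLval : ∀ x : {x // x ∈ V'}, L (A r.1) (x, k) = A r.1 (x.1, k) := by
      intro x; rfl
    simp only [hLval, this]
    rw [Finset.sum_add_distrib]
    simp
  -- φ is surjective
  obtain ⟨x0, hx0⟩ := hV'
  have hsurj : Function.Surjective φ := by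
    intro g
    refine ⟨fun p => if p.1 = ⟨x0, hx0⟩ then g p.2 else 0, ?_⟩
    funext k
    show (∑ x : {x // x ∈ V'}, if x = (⟨x0, hx0⟩ : {x // x ∈ V'}) then g k else 0) = g k
    simp
  -- dimension count
  have hrank := LinearMap.finrank_range_add_finrank_ker φ
  have hrange : Module.finrank ℝ (LinearMap.range φ) = 3 := by
    rw [LinearMap.range_eq_top.mpr hsurj]
    simp [Module.finrank_fintype_fun_eq_card]
  have hdom : Module.finrank ℝ ({x // x ∈ V'} × Fin 3 → ℝ) = V'.card * 3 := by
    rw [Module.finrank_fintype_fun_eq_card]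
    simp [Fintype.card_prod]
  have hkerdim : Module.finrank ℝ (LinearMap.ker φ) + 3 = V'.card * 3 := by
    omega
  -- linear independence inside the kernel
  have hLI'' : LinearIndependent ℝ
      (fun r : {r : Fin m // (ep r).1 ∈ V' ∧ (ep r).2 ∈ V'} =>
        (⟨L (A r.1), hker r⟩ : LinearMap.ker φ)) := by
    exact LinearIndependent.of_comp (LinearMap.ker φ).subtype hLI'
  have hcard := hLI''.fintype_card_le_finrank
  have hcardS : Fintype.card {r : Fin m // (ep r).1 ∈ V' ∧ (ep r).2 ∈ V'} = S.card := by
    rw [hS, Fintype.card_subtype]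
  have h1 : 1 ≤ V'.card := Finset.card_pos.mpr ⟨x0, hx0⟩
  rw [hcardS] at hcard
  omega
end
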